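/- Let F_m be the free group on m ≥ 2 generators with standard symmetric generating set S, let w be a normalized symmetric weight (Σ_{s∈S} w(s) = 1), and let h(w) denote the volume entropy. Then e^{h(w)} ≥ 2m − 1, i.e., the entropy of any normalized weight on F_m is at least ln(2m−1). -/

import Mathlib

/-!
Normalization forces every generator to have weight at most `1/2`. The `m ^ n` positive words
of length `n` are distinct elements of the free group of weight at most `n / 2`, so the ball of
radius `R` contains at least `m ^ ⌊2R⌋` elements. Hence `h ≥ 2 log m`, and
`exp h ≥ m ^ 2 ≥ 2m - 1`.
-/

variable {G : Type*} [Group G]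

/-- The weighted word metric: `dW S w x y` is the infimum of total `w`-weights of words
over `S` representing `y⁻¹ * x`. -/
noncomputable def dW (S : Set G) (w : G → ℝ) (x y : G) : ℝ :=
  sInf {c : ℝ | ∃ l : List G, (∀ s ∈ l, s ∈ S) ∧ l.prod = y⁻¹ * x ∧ c = (l.map w).sum}

/-- The closed ball of radius `R` about the identity in the weighted word metric. -/
noncomputable def ballW (S : Set G) (w : G → ℝ) (R : ℝ) : Set G :=
  {x : G | dW S w x 1 ≤ R}

/-- The standard symmetric generating set of the free group. -/
def stdGens (m : ℕ) : Set (FreeGroup (Fin m)) :=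
  {x | ∃ i : Fin m, x = FreeGroup.of i ∨ x = (FreeGroup.of i)⁻¹}

open Filter Topology

namespace FreeGroup

variable {α : Type*}

lemma prod_map_of (l : List α) : (l.map of).prod = mk (l.map (·, true)) := by
  induction l with
  | nil => rfl
  | cons a l ih => rw [List.map_cons, List.prod_cons, ih, of, mul_mk]; rfl

lemma isReduced_map_true (l : List α) : IsReduced (l.map (·, true)) := by
  induction l with
  | nil => exact .nil
  | cons a l ih => cases l <;> simp_all [IsReduced]

lemma prod_map_of_injective [DecidableEq α] :
    Function.Injective fun l : List α => (l.map of).prod := by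
  intro l₁ l₂ h
  have hw := congrArg toWord h
  simp only [prod_map_of, toWord_mk, (isReduced_map_true _).reduce_eq] at hw
  exact List.map_injective_iff.2 (fun a b hab => (Prod.mk.inj hab).1) hw

end FreeGroup

lemma stdGens_finite (m : ℕ) : (stdGens m).Finite := by
  refine ((Set.finite_range (fun i : Fin m => FreeGroup.of i)).union
    (Set.finite_range fun i : Fin m => (FreeGroup.of i)⁻¹)).subset ?_
  rintro x ⟨i, rfl | rfl⟩
  exacts [Or.inl ⟨i, rfl⟩, Or.inr ⟨i, rfl⟩]

lemma submonoidClosure_stdGens (m : ℕ) : Submonoid.closure (stdGens m) = ⊤ := by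
  refine (Submonoid.eq_top_iff' _).2 fun x => ?_
  induction x using FreeGroup.induction_on with
  | C1 => exact one_mem _
  | of i => exact Submonoid.subset_closure ⟨i, Or.inl rfl⟩
  | inv_of i _ => exact Submonoid.subset_closure ⟨i, Or.inr rfl⟩
  | mul x y hx hy => exact mul_mem hx hy

lemma List.finite_setOf_forall_mem_length_le {α : Type*} {S : Set α} (hS : S.Finite) (N : ℕ) :
    {l : List α | (∀ s ∈ l, s ∈ S) ∧ l.length ≤ N}.Finite := by
  have : Finite S := hS.to_subtype
  refine ((List.finite_length_le S N).image (List.map Subtype.val)).subset ?_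
  rintro l ⟨hlS, hlN⟩
  lift l to List S using hlS
  exact ⟨l, by simpa using hlN, rfl⟩

section WordMetric

variable {S : Set G} {w : G → ℝ}

lemma dW_le_sum (hw : ∀ s ∈ S, 0 ≤ w s) {l : List G} (hl : ∀ s ∈ l, s ∈ S) :
    dW S w l.prod 1 ≤ (l.map w).sum := by
  refine csInf_le ⟨0, ?_⟩ ⟨l, hl, by simp, rfl⟩
  rintro _ ⟨l', hl', -, rfl⟩
  exact List.sum_nonneg fun _ ha => by
    obtain ⟨s, hs, rfl⟩ := List.mem_map.1 ha
    exact hw s (hl' s hs)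

lemma ballW_finite (hS : S.Finite) (hgen : Submonoid.closure S = ⊤) (hw : ∀ s ∈ S, 0 < w s)
    (R : ℝ) : (ballW S w R).Finite := by
  obtain ⟨δ, hδ, hδS⟩ : ∃ δ > 0, ∀ s ∈ S, δ ≤ w s := by
    rcases S.eq_empty_or_nonempty with rfl | hne
    · exact ⟨1, one_pos, by simp⟩
    · obtain ⟨s₀, hs₀, hmin⟩ := S.exists_min_image w hS hne
      exact ⟨w s₀, hw s₀ hs₀, hmin⟩
  refine ((List.finite_setOf_forall_mem_length_le hS ⌈(R + 1) / δ⌉₊).image List.prod).subset ?_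
  intro x hx
  -- `hgen` makes the defining set of `dW` nonempty; otherwise `dW = sInf ∅ = 0` would put `x` in
  -- every ball.
  obtain ⟨l, hlS, rfl⟩ := Submonoid.exists_list_of_mem_closure (hgen ▸ Submonoid.mem_top x)
  rw [ballW, Set.mem_ofPred_eq, dW] at hx
  obtain ⟨_, ⟨l', hl'S, hprod, rfl⟩, hsum⟩ :=
    exists_lt_of_csInf_lt (by exact ⟨_, l, hlS, by simp, rfl⟩) (hx.trans_lt (lt_add_one R))
  have hlen : l'.length * δ ≤ (l'.map w).sum := by
    simpa using List.card_nsmul_le_sum (l'.map w) δ fun c hc => by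
      obtain ⟨s, hs, rfl⟩ := List.mem_map.1 hc
      exact hδS s (hl'S s hs)
  refine ⟨l', ⟨hl'S, ?_⟩, by simpa using hprod⟩
  have : (l'.length : ℝ) ≤ ⌈(R + 1) / δ⌉₊ :=
    ((le_div_iff₀ hδ).2 (by linarith)).trans (Nat.le_ceil _)
  exact_mod_cast this

lemma pow_card_le_ncard_ballW {ι : Type*} [Fintype ι] {g : ι → G} (hgS : ∀ i, g i ∈ S)
    (hinj : Function.Injective fun l : List ι => (l.map g).prod) (hw : ∀ s ∈ S, 0 ≤ w s)
    {c R : ℝ} (hc : ∀ i, w (g i) ≤ c) (hfin : (ballW S w R).Finite) {n : ℕ} (hn : n * c ≤ R) :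
    Fintype.card ι ^ n ≤ (ballW S w R).ncard := by
  let word : (Fin n → ι) → G := fun v => ((List.ofFn v).map g).prod
  have hword : Set.range word ⊆ ballW S w R := by
    rintro _ ⟨v, rfl⟩
    refine (dW_le_sum hw (by simpa using fun i => hgS (v i))).trans ?_
    calc (((List.ofFn v).map g).map w).sum ≤ ((List.ofFn v).map g |>.map w).length • c :=
          List.sum_le_card_nsmul _ _ (by simpa using fun i => hc (v i))
      _ ≤ R := by simpa using hn
  calc Fintype.card ι ^ n = (Set.range word).ncard := by
        have hword_inj : Function.Injective word := hinj.comp List.ofFn_injective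
        rw [Set.ncard_range_of_injective hword_inj]
        simp [Nat.card_eq_fintype_card]
    _ ≤ (ballW S w R).ncard := Set.ncard_le_ncard hword hfin

end WordMetric

lemma le_of_tendsto_log_div_of_pow_le {N : ℝ → ℝ} {a c h : ℝ} (ha : 1 ≤ a) (hc : 0 < c)
    (hN : ∀ R, ∀ n : ℕ, n * c ≤ R → a ^ n ≤ N R)
    (hlim : Tendsto (fun R => Real.log (N R) / R) atTop (𝓝 h)) : Real.log a / c ≤ h := by
  have hloga : 0 ≤ Real.log a := Real.log_nonneg ha
  have hlower : Tendsto (fun R => Real.log a / c - Real.log a / R) atTop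
      (𝓝 (Real.log a / c)) := by
    simpa using tendsto_const_nhds.sub ((tendsto_const_nhds (x := Real.log a)).div_atTop tendsto_id)
  refine le_of_tendsto_of_tendsto hlower hlim ?_
  filter_upwards [eventually_gt_atTop 0] with R hR
  set n := ⌊R / c⌋₊
  have hn : (n : ℝ) * c ≤ R := (le_div_iff₀ hc).1 (Nat.floor_le (by positivity))
  have hn' : R / c - 1 ≤ n := by linarith [Nat.lt_floor_add_one (R / c)]
  have hlogN : n * Real.log a ≤ Real.log (N R) := by
    rw [← Real.log_pow]
    exact Real.log_le_log (by positivity) (hN R n hn)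
  rw [sub_div' hR.ne', div_le_div_iff_of_pos_right hR]
  calc Real.log a / c * R - Real.log a = (R / c - 1) * Real.log a := by field_simp
    _ ≤ n * Real.log a := by gcongr
    _ ≤ _ := hlogN

theorem stmt6_general (m : ℕ) (hm : 2 ≤ m) (w : FreeGroup (Fin m) → ℝ)
    (hwpos : ∀ s ∈ stdGens m, 0 < w s)
    (hnorm : ∑ i : Fin m, 2 * w (FreeGroup.of i) = 1)
    (h : ℝ)
    (hent : Filter.Tendsto
      (fun R : ℝ => Real.log (((ballW (stdGens m) w R).ncard : ℝ)) / R)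
      Filter.atTop (nhds h)) :
    (2 * m - 1 : ℝ) ≤ Real.exp h := by
  have hof : ∀ i, FreeGroup.of i ∈ stdGens m := fun i => ⟨i, Or.inl rfl⟩
  have hhalf : ∀ i, w (FreeGroup.of i) ≤ 1 / 2 := fun i => by
    have := Finset.single_le_sum (fun j _ => (mul_pos two_pos (hwpos _ (hof j))).le)
      (Finset.mem_univ i) (f := fun j => 2 * w (FreeGroup.of j))
    linarith
  have hfin := ballW_finite (stdGens_finite m) (submonoidClosure_stdGens m) hwpos
  have hlog : Real.log m / (1 / 2) ≤ h := by
    refine le_of_tendsto_log_div_of_pow_le (by exact_mod_cast (by omega : 1 ≤ m)) one_half_pos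
      (fun R n hn => ?_) hent
    have := pow_card_le_ncard_ballW hof FreeGroup.prod_map_of_injective
      (fun s hs => (hwpos s hs).le) hhalf (hfin R) hn
    simpa using (Nat.cast_le (α := ℝ)).2 this
  have hm2 : (m : ℝ) ^ 2 ≤ Real.exp h := by
    rw [← Real.exp_log (by positivity : (0 : ℝ) < m ^ 2), Real.log_pow, Nat.cast_ofNat]
    exact Real.exp_le_exp.2 (by linarith [show Real.log m / (1 / 2) = 2 * Real.log m by ring])
  nlinarith [sq_nonneg ((m : ℝ) - 1)]

theorem stmt6 (m : ℕ) (hm : 2 ≤ m) (w : FreeGroup (Fin m) → ℝ)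
    (hwpos : ∀ s ∈ stdGens m, 0 < w s)
    (hwsym : ∀ i : Fin m, w (FreeGroup.of i)⁻¹ = w (FreeGroup.of i))
    (hnorm : ∑ i : Fin m, 2 * w (FreeGroup.of i) = 1)
    (h : ℝ)
    (hent : Filter.Tendsto
      (fun R : ℝ => Real.log (((ballW (stdGens m) w R).ncard : ℝ)) / R)
      Filter.atTop (nhds h)) :
    (2 * m - 1 : ℝ) ≤ Real.exp h :=
  stmt6_general m hm w hwpos hnorm h hent
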